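/- arXiv:2011.01289 — 9 statements merged into one kernel-verified Lean document; each statement's English description precedes it below -/
import Mathlib

section
/- Let G be a group and let S be a finite subset of G. Then the following are equivalent: (1) for all a, b ∈ S, a*b*a⁻¹ ∈ S; (2) the set {a*b*a⁻¹ : a ∈ S, b ∈ S} equals S; (3) the set {g*s*g⁻¹ : g ∈ ⟨S⟩, s ∈ S} equals S, where ⟨S⟩ denotes the subgroup of G generated by S. -/
/-- A subrack of a group `G` is a subset closed under conjugation from within. -/
def IsSubrack {G : Type*} [Group G] (S : Set G) : Prop :=
  ∀ a ∈ S, ∀ b ∈ S, a * b * a⁻¹ ∈ S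

private lemma conj_surj {G : Type*} [Group G] {S : Set G} (hS : S.Finite) (g : G)
    (h : ∀ s ∈ S, g * s * g⁻¹ ∈ S) : ∀ s ∈ S, g⁻¹ * s * g ∈ S := by
  have hmaps : Set.MapsTo (fun x => g * x * g⁻¹) S S := fun x hx => h x hx
  have hinj : Set.InjOn (fun x => g * x * g⁻¹) S := by
    intro x _ y _ hxy
    simpa using hxy
  have hbij := (hS.injOn_iff_bijOn_of_mapsTo hmaps).mp hinj
  intro s hs
  obtain ⟨t, ht, hts⟩ := hbij.surjOn hs
  have : t = g⁻¹ * s * g := by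
    simp only at hts
    group
    rw [← hts]
    group
  rwa [← this]

theorem subrack_tfae {G : Type*} [Group G] (S : Set G) (hS : S.Finite) :
    List.TFAE
      [ (∀ a ∈ S, ∀ b ∈ S, a * b * a⁻¹ ∈ S),
        Set.image2 (fun a b => a * b * a⁻¹) S S = S,
        Set.image2 (fun g s => g * s * g⁻¹) ((Subgroup.closure S : Subgroup G) : Set G) S = S ] := by
  tfae_have 1 → 3
  · intro h1
    apply Set.Subset.antisymm
    · rintro x ⟨g, hg, s, hs, rfl⟩
      induction hg using Subgroup.closure_induction generalizing s with
      | mem a ha => exact h1 a ha s hs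
      | one => simpa using hs
      | mul a b _ _ iha ihb =>
        show a * b * s * (a * b)⁻¹ ∈ S
        have : a * b * s * (a * b)⁻¹ = a * (b * s * b⁻¹) * a⁻¹ := by group
        rw [this]
        exact iha _ (ihb s hs)
      | inv a ha iha =>
        show a⁻¹ * s * a⁻¹⁻¹ ∈ S
        rw [inv_inv]
        exact conj_surj hS a (fun t ht => iha t ht) s hs
    · intro s hs
      exact ⟨1, one_mem _, s, hs, by simp⟩
  tfae_have 3 → 2
  · intro h3
    apply Set.Subset.antisymm
    · rintro x ⟨a, ha, b, hb, rfl⟩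
      rw [← h3]
      exact ⟨a, Subgroup.subset_closure ha, b, hb, rfl⟩
    · intro s hs
      exact ⟨s, hs, s, hs, by group⟩
  tfae_have 2 → 1
  · intro h2 a ha b hb
    rw [← h2]
    exact ⟨a, ha, b, hb, rfl⟩
  tfae_finish
end

section
/- Let G be a finite group, let z be an element of the center Z(G), let a ∈ G, set b = a*z, and assume a is not conjugate to b in G (so the conjugacy classes K_G(a) and K_G(b) are disjoint). Define π : G → G by π(x) = x*z if x ∈ K_G(a), π(x) = x*z⁻¹ if x ∈ K_G(b), and π(x) = x otherwise. Then π is a bijection of G satisfying π(g*a*g⁻¹) = g*b*g⁻¹ and π(g*b*g⁻¹) = g*a*g⁻¹ for all g ∈ G, fixing every element outside K_G(a) ∪ K_G(b), and for every subset S ⊆ G, S is a subrack of G if and only if π(S) is a subrack of G; consequently π induces an automorphism of the subrack lattice R(G). -/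
open scoped Classical

/-- The conjugacy class of `a` in `G`. -/
def conjClass {G : Type*} [Group G] (a : G) : Set G :=
  {x : G | ∃ g : G, g * a * g⁻¹ = x}

theorem central_translate_induces_subrack_automorphism
    {G : Type*} [Group G] [Finite G] (z : G) (hz : z ∈ Subgroup.center G)
    (a b : G) (hb : b = a * z) (hab : ¬ IsConj a b)
    (π : G → G)
    (hπ : ∀ x : G, π x =
      if x ∈ conjClass a then x * z else if x ∈ conjClass b then x * z⁻¹ else x) :
    Function.Bijective π ∧
    (∀ g : G, π (g * a * g⁻¹) = g * b * g⁻¹ ∧ π (g * b * g⁻¹) = g * a * g⁻¹) ∧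
    (∀ x : G, x ∉ conjClass a ∪ conjClass b → π x = x) ∧
    (∀ S : Set G, IsSubrack S ↔ IsSubrack (π '' S)) ∧
    ∃ e : {S : Set G // IsSubrack S} ≃o {S : Set G // IsSubrack S},
      ∀ S : {S : Set G // IsSubrack S}, (e S : Set G) = π '' (S : Set G) := by
  have hzc : ∀ g : G, g * z = z * g := Subgroup.mem_center_iff.mp hz
  have hconjz : ∀ g x : G, g * (x * z) * g⁻¹ = g * x * g⁻¹ * z := by
    intro g x; simp only [mul_assoc]; rw [← hzc g⁻¹]
  have hzyz : ∀ y : G, z * y * z⁻¹ = y := fun y => by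
    rw [← hzc y, mul_inv_cancel_right]
  have hzyz' : ∀ y : G, z⁻¹ * y * z = y := fun y => by
    rw [mul_assoc, hzc y, inv_mul_cancel_left]
  have hAz : ∀ x ∈ conjClass a, x * z ∈ conjClass b := by
    rintro x ⟨g, rfl⟩; exact ⟨g, by rw [hb, hconjz]⟩
  have hBz : ∀ x ∈ conjClass b, x * z⁻¹ ∈ conjClass a := by
    rintro x ⟨g, rfl⟩
    exact ⟨g, by rw [hb, hconjz, mul_inv_cancel_right]⟩
  have hdisj : ∀ x : G, x ∈ conjClass a → x ∈ conjClass b → False := by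
    rintro x ⟨g, rfl⟩ ⟨h, hh⟩
    refine hab (isConj_iff.mpr ⟨h⁻¹ * g, ?_⟩)
    have h1 : (h⁻¹ * g) * a * (h⁻¹ * g)⁻¹ = h⁻¹ * (g * a * g⁻¹) * h := by group
    rw [h1, ← hh]; group
  have hπA : ∀ x ∈ conjClass a, π x = x * z := fun x hx => by
    rw [hπ, if_pos hx]
  have hπB : ∀ x ∈ conjClass b, π x = x * z⁻¹ := fun x hx => by
    rw [hπ, if_neg (fun h => hdisj x h hx), if_pos hx]
  have hπO : ∀ x : G, x ∉ conjClass a → x ∉ conjClass b → π x = x := fun x h1 h2 => by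
    rw [hπ, if_neg h1, if_neg h2]
  have hinv : Function.Involutive π := by
    intro x
    by_cases hxa : x ∈ conjClass a
    · rw [hπA x hxa, hπB _ (hAz x hxa), mul_inv_cancel_right]
    by_cases hxb : x ∈ conjClass b
    · rw [hπB x hxb, hπA _ (hBz x hxb), inv_mul_cancel_right]
    · rw [hπO x hxa hxb, hπO x hxa hxb]
  have hmemconj : ∀ (w c y : G), y ∈ conjClass w → c * y * c⁻¹ ∈ conjClass w := by
    rintro w c y ⟨g, rfl⟩; exact ⟨c * g, by group⟩
  have hmemconj' : ∀ (w c y : G), c * y * c⁻¹ ∈ conjClass w → y ∈ conjClass w := by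
    intro w c y h
    have := hmemconj w c⁻¹ _ h
    simpa [mul_assoc] using this
  have hequiv : ∀ c y : G, π (c * y * c⁻¹) = c * π y * c⁻¹ := by
    intro c y
    by_cases hya : y ∈ conjClass a
    · rw [hπA _ (hmemconj a c y hya), hπA y hya, hconjz]
    by_cases hyb : y ∈ conjClass b
    · rw [hπB _ (hmemconj b c y hyb), hπB y hyb]
      have : c * (y * z⁻¹) * c⁻¹ = c * y * c⁻¹ * z⁻¹ := by
        have h2 := hconjz c (y * z⁻¹)
        rw [mul_assoc y z⁻¹ z, inv_mul_cancel, mul_one] at h2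
        rw [h2, mul_inv_cancel_right]
      rw [this]
    · rw [hπO _ (fun h => hya (hmemconj' a c y h)) (fun h => hyb (hmemconj' b c y h)),
        hπO y hya hyb]
  have hconjπ : ∀ c y : G, π c * y * (π c)⁻¹ = c * y * c⁻¹ := by
    intro c y
    by_cases hca : c ∈ conjClass a
    · rw [hπA c hca]
      calc (c * z) * y * (c * z)⁻¹ = c * (z * y * z⁻¹) * c⁻¹ := by group
        _ = c * y * c⁻¹ := by rw [hzyz]
    by_cases hcb : c ∈ conjClass b
    · rw [hπB c hcb]
      calc (c * z⁻¹) * y * (c * z⁻¹)⁻¹ = c * (z⁻¹ * y * z) * c⁻¹ := by group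
        _ = c * y * c⁻¹ := by rw [hzyz']
    · rw [hπO c hca hcb]
  have himg : ∀ S : Set G, π '' (π '' S) = S := fun S => by
    rw [← Set.image_comp, hinv.comp_self, Set.image_id]
  have hsub : ∀ S : Set G, IsSubrack S → IsSubrack (π '' S) := by
    intro S hS
    rintro _ ⟨u, hu, rfl⟩ _ ⟨v, hv, rfl⟩
    refine ⟨u * v * u⁻¹, hS u hu v hv, ?_⟩
    rw [hequiv u v, hconjπ u (π v)]
  have hiff : ∀ S : Set G, IsSubrack S ↔ IsSubrack (π '' S) := fun S =>
    ⟨hsub S, fun h => by have := hsub _ h; rwa [himg S] at this⟩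
  refine ⟨hinv.bijective, ?_, fun x hx => hπO x (fun h => hx (Or.inl h)) (fun h => hx (Or.inr h)),
    hiff, ?_⟩
  · intro g
    constructor
    · rw [hπA _ ⟨g, rfl⟩, ← hconjz, ← hb]
    · rw [hπB _ ⟨g, rfl⟩, hb, hconjz, mul_inv_cancel_right]
  · refine ⟨⟨⟨fun S => ⟨π '' S, (hiff S).mp S.2⟩, fun S => ⟨π '' S, (hiff S).mp S.2⟩,
      fun S => Subtype.ext (himg S), fun S => Subtype.ext (himg S)⟩, ?_⟩, fun S => rfl⟩
    intro S T
    exact Set.image_subset_image_iff hinv.injective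
end

section
/- Let G be a finite group and let a, b ∈ G generate the same cyclic subgroup, ⟨a⟩ = ⟨b⟩, say b = a^k and a = b^m for integers k, m, and assume a is not conjugate to b in G (so K_G(a) and K_G(b) are disjoint). Define π : G → G by π(x) = x^k if x ∈ K_G(a), π(x) = x^m if x ∈ K_G(b), and π(x) = x otherwise. Then π is a bijection of G satisfying π(g*a*g⁻¹) = g*b*g⁻¹ and π(g*b*g⁻¹) = g*a*g⁻¹ for all g ∈ G, fixing every element outside K_G(a) ∪ K_G(b), and for every subset S ⊆ G, S is a subrack of G if and only if π(S) is a subrack of G; consequently π induces an automorphism of the subrack lattice R(G). -/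
open scoped Classical

theorem power_swap_induces_subrack_automorphism
    {G : Type*} [Group G] [Finite G] (a b : G)
    (hgen : Subgroup.zpowers a = Subgroup.zpowers b)
    (k m : ℤ) (hk : b = a ^ k) (hm : a = b ^ m)
    (hab : ¬ IsConj a b)
    (π : G → G)
    (hπ : ∀ x : G, π x =
      if x ∈ conjClass a then x ^ k else if x ∈ conjClass b then x ^ m else x) :
    Function.Bijective π ∧
    (∀ g : G, π (g * a * g⁻¹) = g * b * g⁻¹ ∧ π (g * b * g⁻¹) = g * a * g⁻¹) ∧
    (∀ x : G, x ∉ conjClass a ∪ conjClass b → π x = x) ∧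
    (∀ S : Set G, IsSubrack S ↔ IsSubrack (π '' S)) ∧
    ∃ e : {S : Set G // IsSubrack S} ≃o {S : Set G // IsSubrack S},
      ∀ S : {S : Set G // IsSubrack S}, (e S : Set G) = π '' (S : Set G) := by
  have hconj : ∀ x y : G, x ∈ conjClass y ↔ IsConj y x := by
    intro x y
    simp [conjClass, isConj_iff, Set.mem_setOf_eq]
  have hdisj : ∀ x : G, x ∈ conjClass a → x ∉ conjClass b := by
    intro x hxa hxb
    exact hab (((hconj x a).1 hxa).trans ((hconj x b).1 hxb).symm)
  -- powers of conjugates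
  have hka : ∀ x : G, x ∈ conjClass a → x ^ k ∈ conjClass b := by
    rintro x ⟨g, rfl⟩
    exact ⟨g, by rw [conj_zpow, ← hk]⟩
  have hmb : ∀ x : G, x ∈ conjClass b → x ^ m ∈ conjClass a := by
    rintro x ⟨g, rfl⟩
    exact ⟨g, by rw [conj_zpow, ← hm]⟩
  -- a^(k*m) = a, b^(m*k) = b
  have hakm : ∀ x : G, x ∈ conjClass a → (x ^ k) ^ m = x := by
    rintro x ⟨g, rfl⟩
    rw [conj_zpow, conj_zpow, ← hk, ← hm]
  have hbmk : ∀ x : G, x ∈ conjClass b → (x ^ m) ^ k = x := by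
    rintro x ⟨g, rfl⟩
    rw [conj_zpow, conj_zpow, ← hm, ← hk]
  -- involution
  have hinv : ∀ x : G, π (π x) = x := by
    intro x
    rcases Classical.em (x ∈ conjClass a) with hxa | hxa
    · have h1 : π x = x ^ k := by rw [hπ, if_pos hxa]
      have h2 : x ^ k ∈ conjClass b := hka x hxa
      have h3 : x ^ k ∉ conjClass a := fun h => hdisj _ h h2
      rw [h1, hπ, if_neg h3, if_pos h2, hakm x hxa]
    · rcases Classical.em (x ∈ conjClass b) with hxb | hxb
      · have h1 : π x = x ^ m := by rw [hπ, if_neg hxa, if_pos hxb]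
        have h2 : x ^ m ∈ conjClass a := hmb x hxb
        rw [h1, hπ, if_pos h2, hbmk x hxb]
      · have h1 : π x = x := by rw [hπ, if_neg hxa, if_neg hxb]
        rw [h1, h1]
  have hbij : Function.Bijective π := Function.Involutive.bijective hinv
  -- conjugation invariance of classes
  have hcls : ∀ (y : G) (g x : G), g * x * g⁻¹ ∈ conjClass y ↔ x ∈ conjClass y := by
    intro y g x
    rw [hconj, hconj]
    constructor
    · intro h
      have : IsConj x (g * x * g⁻¹) := isConj_iff.2 ⟨g, rfl⟩
      exact h.trans this.symm
    · intro h
      exact h.trans (isConj_iff.2 ⟨g, rfl⟩)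
  -- equivariance
  have hequiv : ∀ (g x : G), π (g * x * g⁻¹) = g * π x * g⁻¹ := by
    intro g x
    rcases Classical.em (x ∈ conjClass a) with hxa | hxa
    · rw [hπ, if_pos ((hcls a g x).2 hxa), conj_zpow, hπ x, if_pos hxa]
    · rcases Classical.em (x ∈ conjClass b) with hxb | hxb
      · rw [hπ, if_neg (fun h => hxa ((hcls a g x).1 h)),
          if_pos ((hcls b g x).2 hxb), conj_zpow, hπ x, if_neg hxa, if_pos hxb]
      · rw [hπ, if_neg (fun h => hxa ((hcls a g x).1 h)),
          if_neg (fun h => hxb ((hcls b g x).1 h)), hπ x, if_neg hxa, if_neg hxb]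
  -- swap property
  have hswap : ∀ g : G, π (g * a * g⁻¹) = g * b * g⁻¹ ∧ π (g * b * g⁻¹) = g * a * g⁻¹ := by
    intro g
    have ha' : g * a * g⁻¹ ∈ conjClass a := ⟨g, rfl⟩
    have hb' : g * b * g⁻¹ ∈ conjClass b := ⟨g, rfl⟩
    have hb'' : g * b * g⁻¹ ∉ conjClass a := fun h => hdisj _ h hb'
    constructor
    · rw [hπ, if_pos ha', conj_zpow, ← hk]
    · rw [hπ, if_neg hb'', if_pos hb', conj_zpow, ← hm]
  -- fixes complement
  have hfix : ∀ x : G, x ∉ conjClass a ∪ conjClass b → π x = x := by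
    intro x hx
    rw [Set.mem_union] at hx
    push_neg at hx
    rw [hπ, if_neg hx.1, if_neg hx.2]
  -- π u is an integer power of u
  have hpowπ : ∀ u : G, ∃ j : ℤ, π u = u ^ j := by
    intro u
    rcases Classical.em (u ∈ conjClass a) with h | h
    · exact ⟨k, by rw [hπ, if_pos h]⟩
    · rcases Classical.em (u ∈ conjClass b) with h' | h'
      · exact ⟨m, by rw [hπ, if_neg h, if_pos h']⟩
      · exact ⟨1, by rw [hπ, if_neg h, if_neg h', zpow_one]⟩
  -- iterated conjugation within a subrack
  have hiterN : ∀ S : Set G, IsSubrack S → ∀ u ∈ S, ∀ v ∈ S, ∀ n : ℕ,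
      u ^ n * v * (u ^ n)⁻¹ ∈ S := by
    intro S hS u hu v hv n
    induction n with
    | zero => simpa using hv
    | succ n ih =>
      have : u ^ (n + 1) * v * (u ^ (n + 1))⁻¹ = u * (u ^ n * v * (u ^ n)⁻¹) * u⁻¹ := by
        rw [pow_succ']
        group
      rw [this]
      exact hS u hu _ ih
  have hiter : ∀ S : Set G, IsSubrack S → ∀ u ∈ S, ∀ v ∈ S, ∀ j : ℤ,
      u ^ j * v * (u ^ j)⁻¹ ∈ S := by
    intro S hS u hu v hv j
    have hpos : 0 < (orderOf u : ℤ) := by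
      exact_mod_cast orderOf_pos u
    have hnn : 0 ≤ j % (orderOf u : ℤ) := Int.emod_nonneg j (ne_of_gt hpos)
    have hj : u ^ j = u ^ (j % (orderOf u : ℤ)).toNat := by
      rw [← zpow_natCast, Int.toNat_of_nonneg hnn, zpow_mod_orderOf]
    rw [hj]
    exact hiterN S hS u hu v hv _
  -- subrack preservation
  have hsub : ∀ S : Set G, IsSubrack S → IsSubrack (π '' S) := by
    intro S hS
    rintro _ ⟨u, hu, rfl⟩ _ ⟨v, hv, rfl⟩
    obtain ⟨j, hj⟩ := hpowπ u
    refine ⟨u ^ j * v * (u ^ j)⁻¹, hiter S hS u hu v hv j, ?_⟩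
    rw [hequiv, ← hj]
  have himg : ∀ S : Set G, π '' (π '' S) = S := by
    intro S
    rw [← Set.image_comp]
    have : π ∘ π = id := funext hinv
    rw [this, Set.image_id]
  have hiff : ∀ S : Set G, IsSubrack S ↔ IsSubrack (π '' S) := by
    intro S
    refine ⟨hsub S, fun h => ?_⟩
    have := hsub _ h
    rwa [himg] at this
  refine ⟨hbij, hswap, hfix, hiff, ?_⟩
  refine ⟨⟨⟨fun S => ⟨π '' S.1, (hiff S.1).1 S.2⟩, fun S => ⟨π '' S.1, (hiff S.1).1 S.2⟩,
    ?_, ?_⟩, ?_⟩, fun S => rfl⟩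
  · intro S; ext1; exact himg S.1
  · intro S; ext1; exact himg S.1
  · intro S T
    exact Set.image_subset_image_iff hbij.injective
end

section
/- Let G be a finite non-abelian group and let A ⊆ G. Then A is the underlying set of a maximal abelian subgroup of G if and only if A is a subrack of G with the property that every subset of A is a subrack of G, and A is maximal (with respect to inclusion) among subracks of G having this property. (The property that every subset of A is a subrack is equivalent to the interval [∅, A] in the subrack lattice R(G) being a Boolean algebra.) -/
/-- If every subset of `A` is a subrack, then elements of `A` pairwise commute. -/
theorem comm_of_all_subsets_subrack {G : Type*} [Group G] {A : Set G}
    (h : ∀ B ⊆ A, IsSubrack B) : ∀ x ∈ A, ∀ y ∈ A, x * y = y * x := by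
  intro x hx y hy
  have hB : ({x, y} : Set G) ⊆ A := by
    intro z hz; rcases hz with rfl | rfl <;> assumption
  have := h {x, y} hB x (Or.inl rfl) y (Or.inr rfl)
  rcases this with h1 | h1
  · have hyx : y = x := by
      have : x * y = x * x := by
        have := congrArg (· * x) h1
        simpa [mul_assoc] using this
      exact mul_left_cancel this
    rw [hyx]
  · have := congrArg (· * x) h1
    simpa [mul_assoc] using this

theorem closure_comm_of_comm {G : Type*} [Group G] {A : Set G}
    (h : ∀ x ∈ A, ∀ y ∈ A, x * y = y * x) :
    ∀ x ∈ Subgroup.closure A, ∀ y ∈ Subgroup.closure A, x * y = y * x := by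
  intro x hx y hy
  induction hx, hy using Subgroup.closure_induction₂ with
  | mem a b ha hb => exact h a ha b hb
  | one_left => simp
  | one_right => simp
  | mul_left a b c _ _ _ h1 h2 =>
      calc a * b * c = a * (b * c) := by rw [mul_assoc]
        _ = a * (c * b) := by rw [h2]
        _ = a * c * b := by rw [mul_assoc]
        _ = c * a * b := by rw [h1]
        _ = c * (a * b) := by rw [mul_assoc]
  | mul_right a b c _ _ _ h1 h2 =>
      calc c * (a * b) = c * a * b := by rw [mul_assoc]
        _ = a * c * b := by rw [h1]
        _ = a * (c * b) := by rw [mul_assoc]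
        _ = a * (b * c) := by rw [h2]
        _ = a * b * c := by rw [mul_assoc]
  | inv_left a b _ _ h1 =>
      have hc : Commute a b := h1
      exact hc.inv_left.eq
  | inv_right a b _ _ h1 =>
      have hc : Commute a b := h1
      exact hc.inv_right.eq

theorem comm_set_isSubrack {G : Type*} [Group G] {A : Set G}
    (h : ∀ x ∈ A, ∀ y ∈ A, x * y = y * x) : ∀ B ⊆ A, IsSubrack B := by
  intro B hB a ha b hb
  have : a * b * a⁻¹ = b := by
    rw [h a (hB ha) b (hB hb)]
    group
  rw [this]; exact hb

theorem maximal_abelian_subgroup_iff_maximal_boolean_subrack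
    {G : Type*} [Group G] [Finite G] (hG : ∃ x y : G, x * y ≠ y * x) (A : Set G) :
    (∃ K : Subgroup G, (K : Set G) = A ∧ (∀ x ∈ K, ∀ y ∈ K, x * y = y * x) ∧
        ∀ K' : Subgroup G, (∀ x ∈ K', ∀ y ∈ K', x * y = y * x) → K ≤ K' → K = K')
    ↔
    (IsSubrack A ∧ (∀ B ⊆ A, IsSubrack B) ∧
      ∀ A' : Set G, IsSubrack A' → (∀ B ⊆ A', IsSubrack B) → A ⊆ A' → A = A') := by
  constructor
  · rintro ⟨K, rfl, hcomm, hmax⟩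
    refine ⟨?_, comm_set_isSubrack hcomm, ?_⟩
    · exact comm_set_isSubrack hcomm _ (le_refl _)
    · intro A' _ hall hKA'
      have hc : ∀ x ∈ A', ∀ y ∈ A', x * y = y * x := comm_of_all_subsets_subrack hall
      have hcl : ∀ x ∈ Subgroup.closure A', ∀ y ∈ Subgroup.closure A', x * y = y * x :=
        closure_comm_of_comm hc
      have hle : K ≤ Subgroup.closure A' :=
        fun x hx => Subgroup.subset_closure (hKA' hx)
      have hK : K = Subgroup.closure A' := hmax _ hcl hle
      have hsub : A' ⊆ (K : Set G) := by
        intro z hz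
        have hz' : z ∈ Subgroup.closure A' := Subgroup.subset_closure hz
        rw [hK]
        exact hz'
      exact Set.Subset.antisymm hKA' hsub
  · rintro ⟨_, hall, hmax⟩
    have hc : ∀ x ∈ A, ∀ y ∈ A, x * y = y * x := comm_of_all_subsets_subrack hall
    have hcl : ∀ x ∈ Subgroup.closure A, ∀ y ∈ Subgroup.closure A, x * y = y * x :=
      closure_comm_of_comm hc
    have hAeq : A = (Subgroup.closure A : Set G) := by
      apply hmax
      · exact comm_set_isSubrack hcl _ (le_refl _)
      · exact comm_set_isSubrack hcl
      · exact Subgroup.subset_closure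
    refine ⟨Subgroup.closure A, hAeq.symm, hcl, ?_⟩
    intro K' hK'comm hle
    have hsub : (K' : Set G) ⊆ A → K' ≤ Subgroup.closure A := by
      intro h; exact fun x hx => Subgroup.subset_closure (h hx)
    have : A = (K' : Set G) := by
      apply hmax
      · exact comm_set_isSubrack hK'comm _ (le_refl _)
      · exact comm_set_isSubrack hK'comm
      · rw [hAeq]; exact_mod_cast hle
    apply le_antisymm hle
    intro x hx
    have : x ∈ A := by rw [this]; exact hx
    rw [hAeq] at this
    exact this
end

section
/- Let G be a finite non-abelian group. (1) For every maximal abelian subgroup A of G, the set N_A := {x ∈ A : K_G(x) ⊆ A} (the union of the conjugacy classes of G that are contained in A) is the underlying set of a normal abelian subgroup of G. (2) Every maximal normal abelian subgroup N of G (a normal abelian subgroup not properly contained in any normal abelian subgroup) satisfies N = N_A for some maximal abelian subgroup A of G. -/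
/-!
The set `N_A` is the normal core of `A`, the largest normal subgroup of `G` inside `A`; it is
abelian because `A` is. A maximal normal abelian subgroup `N` lies in some maximal abelian
subgroup `A` (Zorn), hence in the normal core of `A`, and maximality of `N` forces equality.
-/

namespace Subgroup

variable {G : Type*} [Group G]

theorem coe_normalCore_eq_setOf_conjClass_subset (A : Subgroup G) :
    (A.normalCore : Set G) = {x : G | x ∈ A ∧ conjClass x ⊆ (A : Set G)} := by
  ext x
  constructor
  · intro hx
    exact ⟨A.normalCore_le hx, by rintro _ ⟨g, rfl⟩; exact hx g⟩
  · rintro ⟨-, hx⟩ g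
    exact hx ⟨g, rfl⟩

theorem exists_maximal_commuting_ge {N : Subgroup G} (hN : ∀ x ∈ N, ∀ y ∈ N, x * y = y * x) :
    ∃ A : Subgroup G, N ≤ A ∧
      Maximal (fun B : Subgroup G => ∀ x ∈ B, ∀ y ∈ B, x * y = y * x) A := by
  refine zorn_le_nonempty₀ _ (fun c hc hchain B hB => ⟨sSup c, ?_, fun _ => le_sSup⟩) N hN
  have hdir := hchain.directedOn
  intro x hx y hy
  obtain ⟨Bx, hBx, hxB⟩ := (mem_sSup_of_directedOn ⟨B, hB⟩ hdir).1 hx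
  obtain ⟨By, hBy, hyB⟩ := (mem_sSup_of_directedOn ⟨B, hB⟩ hdir).1 hy
  obtain ⟨C, hC, hBxC, hByC⟩ := hdir Bx hBx By hBy
  exact hc hC x (hBxC hxB) y (hByC hyB)

end Subgroup

theorem maximal_normal_abelian_subgroups_from_maximal_abelian_general
    {G : Type*} [Group G] :
    (∀ A : Subgroup G, (∀ x ∈ A, ∀ y ∈ A, x * y = y * x) →
      (∀ A' : Subgroup G, (∀ x ∈ A', ∀ y ∈ A', x * y = y * x) → A ≤ A' → A = A') →
      ∃ N : Subgroup G, (N : Set G) = {x : G | x ∈ A ∧ conjClass x ⊆ (A : Set G)} ∧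
        N.Normal ∧ (∀ x ∈ N, ∀ y ∈ N, x * y = y * x))
    ∧
    (∀ N : Subgroup G, N.Normal → (∀ x ∈ N, ∀ y ∈ N, x * y = y * x) →
      (∀ N' : Subgroup G, N'.Normal → (∀ x ∈ N', ∀ y ∈ N', x * y = y * x) → N ≤ N' → N = N') →
      ∃ A : Subgroup G, (∀ x ∈ A, ∀ y ∈ A, x * y = y * x) ∧
        (∀ A' : Subgroup G, (∀ x ∈ A', ∀ y ∈ A', x * y = y * x) → A ≤ A' → A = A') ∧
        (N : Set G) = {x : G | x ∈ A ∧ conjClass x ⊆ (A : Set G)}) := by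
  refine ⟨fun A hA _ => ?_, fun N hN hNcomm hNmax => ?_⟩
  · exact ⟨A.normalCore, A.coe_normalCore_eq_setOf_conjClass_subset, A.normalCore_normal,
      fun x hx y hy => hA x (A.normalCore_le hx) y (A.normalCore_le hy)⟩
  · obtain ⟨A, hNA, hAcomm, hAmax⟩ := Subgroup.exists_maximal_commuting_ge hNcomm
    have hN_eq : N = A.normalCore :=
      hNmax _ A.normalCore_normal
        (fun x hx y hy => hAcomm x (A.normalCore_le hx) y (A.normalCore_le hy))
        (Subgroup.normal_le_normalCore.mpr hNA)
    refine ⟨A, hAcomm, fun A' hA' hAA' => le_antisymm hAA' (hAmax hA' hAA'), ?_⟩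
    rw [hN_eq, A.coe_normalCore_eq_setOf_conjClass_subset]

theorem maximal_normal_abelian_subgroups_from_maximal_abelian
    {G : Type*} [Group G] [Finite G] (hG : ∃ x y : G, x * y ≠ y * x) :
    (∀ A : Subgroup G, (∀ x ∈ A, ∀ y ∈ A, x * y = y * x) →
      (∀ A' : Subgroup G, (∀ x ∈ A', ∀ y ∈ A', x * y = y * x) → A ≤ A' → A = A') →
      ∃ N : Subgroup G, (N : Set G) = {x : G | x ∈ A ∧ conjClass x ⊆ (A : Set G)} ∧
        N.Normal ∧ (∀ x ∈ N, ∀ y ∈ N, x * y = y * x))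
    ∧
    (∀ N : Subgroup G, N.Normal → (∀ x ∈ N, ∀ y ∈ N, x * y = y * x) →
      (∀ N' : Subgroup G, N'.Normal → (∀ x ∈ N', ∀ y ∈ N', x * y = y * x) → N ≤ N' → N = N') →
      ∃ A : Subgroup G, (∀ x ∈ A, ∀ y ∈ A, x * y = y * x) ∧
        (∀ A' : Subgroup G, (∀ x ∈ A', ∀ y ∈ A', x * y = y * x) → A ≤ A' → A = A') ∧
        (N : Set G) = {x : G | x ∈ A ∧ conjClass x ⊆ (A : Set G)}) :=
  maximal_normal_abelian_subgroups_from_maximal_abelian_general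
end

section
/- Let G be a finite group and let N be a normal subgroup of G. Then: (1) for every a ∈ G, the coset a*N is a subrack of G; (2) for any a₁, …, a_k ∈ G, the smallest subrack of G containing a₁N ∪ ⋯ ∪ a_kN equals the union ⋃_{x ∈ R} xN of the cosets of N that meet R, where R = ⟨{a₁, …, a_k}⟩_rk is the smallest subrack of G containing {a₁, …, a_k}. -/
/-- The subrack of `G` generated by a subset `T`: the smallest subrack containing `T`. -/
def subrackClosure {G : Type*} [Group G] (T : Set G) : Set G :=
  ⋂₀ {S : Set G | IsSubrack S ∧ T ⊆ S}

lemma subset_subrackClosure {G : Type*} [Group G] (T : Set G) : T ⊆ subrackClosure T :=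
  fun _ hx _ hS => hS.2 hx

lemma subrackClosure_min {G : Type*} [Group G] {T S : Set G} (h1 : IsSubrack S) (h2 : T ⊆ S) :
    subrackClosure T ⊆ S := fun _ hx => hx S ⟨h1, h2⟩

lemma isSubrack_subrackClosure {G : Type*} [Group G] (T : Set G) :
    IsSubrack (subrackClosure T) := by
  intro a ha b hb S hS
  exact hS.1 a (ha S hS) b (hb S hS)

lemma mem_coset {G : Type*} [Group G] {N : Subgroup G} {x y : G} :
    y ∈ (fun n => x * n) '' (N : Set G) ↔ x⁻¹ * y ∈ N := by
  constructor
  · rintro ⟨n, hn, rfl⟩; simpa using hn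
  · intro h; exact ⟨x⁻¹ * y, h, by group⟩

theorem cosets_are_subracks_and_join_of_cosets
    {G : Type*} [Group G] [Finite G] (N : Subgroup G) (hN : N.Normal) :
    (∀ a : G, IsSubrack ((fun n => a * n) '' (N : Set G)))
    ∧
    (∀ (k : ℕ) (a : Fin k → G),
      subrackClosure (⋃ i : Fin k, (fun n => a i * n) '' (N : Set G)) =
        ⋃ x ∈ subrackClosure (Set.range a), (fun n => x * n) '' (N : Set G)) := by
  constructor
  · intro a x hx y hy
    rw [mem_coset] at hx hy ⊢
    have : a⁻¹ * (x * y * x⁻¹) =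
        (a⁻¹ * x) * (a * ((a⁻¹ * y) * (a⁻¹ * x)⁻¹) * a⁻¹) := by group
    rw [this]
    exact N.mul_mem hx (hN.conj_mem _ (N.mul_mem hy (N.inv_mem hx)) a)
  · intro k a
    set R := subrackClosure (Set.range a) with hR
    set U : Set G := ⋃ x ∈ R, (fun n => x * n) '' (N : Set G) with hU
    have hmemU : ∀ y : G, y ∈ U ↔ ∃ x ∈ R, x⁻¹ * y ∈ N := by
      intro y
      simp only [hU, Set.mem_iUnion, mem_coset, exists_prop]
    have hUsub : IsSubrack U := by
      intro p hp q hq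
      rw [hmemU] at hp hq ⊢
      obtain ⟨x, hx, hxp⟩ := hp
      obtain ⟨y, hy, hyq⟩ := hq
      refine ⟨x * y * x⁻¹, isSubrack_subrackClosure _ x hx y hy, ?_⟩
      have : (x * y * x⁻¹)⁻¹ * (p * q * p⁻¹) =
          x * ((y⁻¹ * (x⁻¹ * p) * y) * (y⁻¹ * q) * (x⁻¹ * p)⁻¹) * x⁻¹ := by group
      rw [this]
      have h1 : y⁻¹ * (x⁻¹ * p) * y ∈ N := by
        simpa using hN.conj_mem _ hxp y⁻¹
      exact hN.conj_mem _ (N.mul_mem (N.mul_mem h1 hyq) (N.inv_mem hxp)) x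
    set C := subrackClosure (⋃ i : Fin k, (fun n => a i * n) '' (N : Set G)) with hC
    apply le_antisymm
    · -- C ⊆ U since U is a subrack containing each coset aᵢN
      apply subrackClosure_min hUsub
      intro y hy
      simp only [Set.mem_iUnion, mem_coset] at hy
      obtain ⟨i, hi⟩ := hy
      rw [hmemU]
      exact ⟨a i, subset_subrackClosure _ ⟨i, rfl⟩, hi⟩
    · -- U ⊆ C : the set S of x whose coset is inside C is a subrack containing range a
      set S : Set G := {x : G | (fun n => x * n) '' (N : Set G) ⊆ C} with hS
      have hSsub : IsSubrack S := by
        intro x hx y hy z hz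
        rw [mem_coset] at hz
        -- z = x y x⁻¹ n ; write z = x * (y * (x⁻¹ n x)) * x⁻¹
        have hn' : y⁻¹ * (x⁻¹ * z * x) ∈ N := by
          have h2 : y⁻¹ * (x⁻¹ * z * x) = x⁻¹ * ((x * y * x⁻¹)⁻¹ * z) * x⁻¹⁻¹ := by group
          rw [h2]
          exact hN.conj_mem _ hz x⁻¹
        have hx1 : x ∈ C := hx (mem_coset.mpr (by simpa using N.one_mem))
        have hy2 : y * (y⁻¹ * (x⁻¹ * z * x)) ∈ C := hy (mem_coset.mpr (by simpa using hn'))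
        have := isSubrack_subrackClosure _ x hx1 _ hy2
        have heq : x * (y * (y⁻¹ * (x⁻¹ * z * x))) * x⁻¹ = z := by group
        rwa [heq] at this
      have hrange : Set.range a ⊆ S := by
        rintro _ ⟨i, rfl⟩
        intro z hz
        apply subset_subrackClosure
        exact Set.mem_iUnion.mpr ⟨i, hz⟩
      have hRS : R ⊆ S := subrackClosure_min hSsub hrange
      intro z hz
      rw [hmemU] at hz
      obtain ⟨x, hx, hxz⟩ := hz
      exact hRS hx (mem_coset.mpr hxz)
end

section
/- Let G be a finite group and let N be a normal subgroup of G. The map sending a subrack T of the quotient group G/N to its preimage under the quotient homomorphism G → G/N is an order isomorphism from the poset of subracks of G/N (ordered by inclusion) onto the poset of those subracks of G that are unions of cosets of N (ordered by inclusion). -/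
theorem subracks_of_quotient_orderIso_coset_union_subracks
    {G : Type*} [Group G] [Finite G] (N : Subgroup G) [N.Normal] :
    ∃ e : {T : Set (G ⧸ N) // IsSubrack T} ≃o
        {S : Set G // IsSubrack S ∧
          ∀ x ∈ S, ∀ y : G, (y : G ⧸ N) = (x : G ⧸ N) → y ∈ S},
      ∀ T : {T : Set (G ⧸ N) // IsSubrack T},
        (e T : Set G) = (QuotientGroup.mk : G → G ⧸ N) ⁻¹' (T : Set (G ⧸ N)) := by
  classical
  set π : G → G ⧸ N := QuotientGroup.mk with hπ
  have hsurj : Function.Surjective π := Quotient.exists_rep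
  refine ⟨{
    toFun := fun T => ⟨π ⁻¹' (T : Set (G ⧸ N)), ?_, ?_⟩
    invFun := fun S => ⟨π '' (S : Set G), ?_⟩
    left_inv := ?_
    right_inv := ?_
    map_rel_iff' := ?_ }, fun T => rfl⟩
  · intro a ha b hb
    have := T.2 (π a) ha (π b) hb
    simpa [π, Set.mem_preimage] using this
  · intro x hx y hy
    simpa [Set.mem_preimage, hy] using hx
  · rintro _ ⟨a, ha, rfl⟩ _ ⟨b, hb, rfl⟩
    exact ⟨a * b * a⁻¹, S.2.1 a ha b hb, by simp [π]⟩
  · intro T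
    ext x
    simp only [Set.mem_image, Set.mem_preimage]
    constructor
    · rintro ⟨a, ha, rfl⟩; exact ha
    · intro hx
      obtain ⟨a, rfl⟩ := hsurj x
      exact ⟨a, hx, rfl⟩
  · intro S
    ext x
    simp only [Set.mem_preimage, Set.mem_image]
    constructor
    · rintro ⟨a, ha, h⟩
      exact S.2.2 a ha x h.symm
    · intro hx; exact ⟨x, hx, rfl⟩
  · intro T₁ T₂
    constructor
    · intro h x hx
      obtain ⟨a, rfl⟩ := hsurj x
      exact h hx
    · intro h x hx
      exact h hx
end

section
/- Let G be a finite group with trivial center, let a ∈ G, and let x ∈ A_G(a). Fix g₁ ∈ G, let P₁ be the equivalence class of g₁ under ≈_x, and let P be the equivalence class of g₁ under ≈_a. Then there is a positive integer k such that for every g ∈ P, the orbit of g under the conjugation action of the cyclic group ⟨x⟩ (i.e., the set {xⁿ*g*x⁻ⁿ : n ∈ ℤ}) has cardinality exactly k, and k divides the cardinality of P₁. -/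
/-- `B_G(a, g) = ⟨{a, g}⟩_rk ∩ K_G(g)`. -/
def subrackB {G : Type*} [Group G] (a g : G) : Set G :=
  subrackClosure {a, g} ∩ conjClass g

/-- The relation `∼ₐ` whose equivalence classes form the hypothetical pseudo cycle
form of `a`: `g ∼ₐ h` iff `g` and `h` lie in exactly the same sets `B_G(a, y)`. -/
def pseudoRel {G : Type*} [Group G] (a : G) (g h : G) : Prop :=
  ∀ y : G, g ∈ subrackB a y ↔ h ∈ subrackB a y

/-- The abelian set associated with `a`: elements `x` such that `∼ₓ` refines `∼ₐ`. -/
def assocAbelianSet {G : Type*} [Group G] (a : G) : Set G :=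
  {x : G | ∀ g h : G, pseudoRel x g h → pseudoRel a g h}

/-- The relation `≈ₐ` whose equivalence classes form the hypothetical cycle form of `a`. -/
def cycleRel {G : Type*} [Group G] (a : G) (g h : G) : Prop :=
  pseudoRel a g h ∧
    ∀ x : G, x * a = a * x → (x * g * x⁻¹ = g ↔ x * h * x⁻¹ = h)

namespace CycleAux

variable {G : Type*} [Group G]

lemma subset_closure (T : Set G) : T ⊆ subrackClosure T := fun _ ht S hS => hS.2 ht

lemma isSubrack_closure (T : Set G) : IsSubrack (subrackClosure T) := by
  intro a ha b hb S hS
  exact hS.1 a (ha S hS) b (hb S hS)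

lemma closure_subset {T S : Set G} (h1 : IsSubrack S) (h2 : T ⊆ S) : subrackClosure T ⊆ S :=
  fun _ hg => hg S ⟨h1, h2⟩

lemma conj_mem_subrackB {x y g : G} (h : g ∈ subrackB x y) : x * g * x⁻¹ ∈ subrackB x y := by
  obtain ⟨h1, h2⟩ := h
  refine ⟨isSubrack_closure _ x (subset_closure _ (Or.inl rfl)) g h1, ?_⟩
  obtain ⟨c, hc⟩ := h2
  exact ⟨x * c, by rw [← hc]; group⟩

lemma pow_conj_mem_subrackB {x y g : G} (n : ℕ) (h : g ∈ subrackB x y) :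
    x ^ n * g * (x ^ n)⁻¹ ∈ subrackB x y := by
  induction n with
  | zero => simpa using h
  | succ m ih =>
    have key : x ^ (m + 1) * g * (x ^ (m + 1))⁻¹ = x * (x ^ m * g * (x ^ m)⁻¹) * x⁻¹ := by
      rw [pow_succ']; group
    rw [key]
    exact conj_mem_subrackB ih

lemma conj_mem_subrackB_iff [Finite G] {x y g : G} :
    x * g * x⁻¹ ∈ subrackB x y ↔ g ∈ subrackB x y := by
  constructor
  · intro h
    have hm : 0 < orderOf x := orderOf_pos x
    have h2 := pow_conj_mem_subrackB (orderOf x - 1) h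
    have key : x ^ (orderOf x - 1) * (x * g * x⁻¹) * (x ^ (orderOf x - 1))⁻¹ = g := by
      have hxo : x ^ (orderOf x - 1) * x = 1 := by
        rw [← pow_succ, Nat.sub_add_cancel hm, pow_orderOf_eq_one]
      calc x ^ (orderOf x - 1) * (x * g * x⁻¹) * (x ^ (orderOf x - 1))⁻¹
          = (x ^ (orderOf x - 1) * x) * g * ((x ^ (orderOf x - 1)) * x)⁻¹ := by group
        _ = g := by rw [hxo]; group
    rwa [key] at h2
  · exact conj_mem_subrackB

lemma pow_conj_mem_subrackB_iff [Finite G] {x y g : G} (n : ℕ) :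
    x ^ n * g * (x ^ n)⁻¹ ∈ subrackB x y ↔ g ∈ subrackB x y := by
  induction n with
  | zero => simp
  | succ m ih =>
    have key : x ^ (m + 1) * g * (x ^ (m + 1))⁻¹ = x * (x ^ m * g * (x ^ m)⁻¹) * x⁻¹ := by
      rw [pow_succ']; group
    rw [key, conj_mem_subrackB_iff, ih]

lemma zpow_eq_pow_natAbs [Finite G] (x : G) (n : ℤ) : ∃ m : ℕ, x ^ n = x ^ m := by
  refine ⟨(n % (orderOf x : ℤ)).toNat, ?_⟩
  have hm : 0 < orderOf x := orderOf_pos x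
  have hnn : 0 ≤ n % (orderOf x : ℤ) :=
    Int.emod_nonneg n (by exact_mod_cast hm.ne')
  rw [← zpow_natCast, Int.toNat_of_nonneg hnn, zpow_mod_orderOf]

lemma zpow_conj_mem_subrackB_iff [Finite G] {x y g : G} (n : ℤ) :
    x ^ n * g * (x ^ n)⁻¹ ∈ subrackB x y ↔ g ∈ subrackB x y := by
  obtain ⟨m, hm⟩ := zpow_eq_pow_natAbs x n
  rw [hm, pow_conj_mem_subrackB_iff]

lemma pseudoRel_zpow_conj [Finite G] (x g : G) (n : ℤ) :
    pseudoRel x g (x ^ n * g * (x ^ n)⁻¹) :=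
  fun y => (zpow_conj_mem_subrackB_iff n).symm

lemma comm_of_assoc [Finite G] {a x : G} (hx : x ∈ assocAbelianSet a) : x * a = a * x := by
  have p : pseudoRel x a (x * a * x⁻¹) := by
    have := pseudoRel_zpow_conj x a 1
    simpa using this
  have q := hx a (x * a * x⁻¹) p
  have ha : a ∈ subrackB a a :=
    ⟨subset_closure _ (Or.inl rfl), 1, by group⟩
  have h2 := (q a).mp ha
  have hpair : ({a, a} : Set G) = {a} := by simp
  have h3 : subrackClosure ({a, a} : Set G) ⊆ {a} := by
    rw [hpair]
    refine closure_subset ?_ (subset_refl _)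
    intro u hu v hv
    simp only [Set.mem_singleton_iff] at hu hv ⊢
    subst hu; subst hv; group
  have := h3 h2.1
  simp only [Set.mem_singleton_iff] at this
  have : x * a = a * x := by
    have h4 : x * a * x⁻¹ = a := this
    calc x * a = (x * a * x⁻¹) * x := by group
      _ = a * x := by rw [h4]
  exact this

/-- conjugation by `x ^ n` -/
def cZ (x : G) (n : ℤ) (g : G) : G := x ^ n * g * (x ^ n)⁻¹

lemma cZ_zero (x g : G) : cZ x 0 g = g := by simp [cZ]

lemma cZ_add (x : G) (m n : ℤ) (g : G) : cZ x m (cZ x n g) = cZ x (m + n) g := by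
  simp only [cZ, zpow_add]; group

lemma cZ_inj {x : G} {n : ℤ} {g h : G} (H : cZ x n g = cZ x n h) : g = h := by
  simpa [cZ, mul_assoc] using H

lemma cZ_eq_iff (x : G) (n m : ℤ) (g : G) :
    cZ x n g = cZ x m g ↔ cZ x (n - m) g = g := by
  constructor
  · intro h
    have h2 := congrArg (cZ x (-m)) h
    rw [cZ_add, cZ_add, neg_add_cancel, cZ_zero, neg_add_eq_sub] at h2
    exact h2
  · intro h
    have h2 := congrArg (cZ x m) h
    rw [cZ_add, show m + (n - m) = n by ring] at h2
    exact h2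

lemma stab_shift {x g h : G} (H : ∀ n : ℤ, cZ x n g = g ↔ cZ x n h = h) (n m : ℤ) :
    cZ x n g = cZ x m g ↔ cZ x n h = cZ x m h := by
  rw [cZ_eq_iff, cZ_eq_iff, H]

lemma card_orbit_eq {x g h : G}
    (H : ∀ n : ℤ, cZ x n g = g ↔ cZ x n h = h) :
    Nat.card {y : G | ∃ n : ℤ, cZ x n g = y} = Nat.card {y : G | ∃ n : ℤ, cZ x n h = y} := by
  classical
  refine Nat.card_eq_of_bijective
    (fun y => ⟨cZ x (Classical.choose y.2) h, Classical.choose y.2, rfl⟩) ⟨?_, ?_⟩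
  · intro y1 y2 he
    have h1 := Classical.choose_spec y1.2
    have h2 := Classical.choose_spec y2.2
    simp only [Subtype.mk.injEq] at he
    have := (stab_shift H _ _).mpr he
    apply Subtype.ext
    rw [← h1, ← h2, this]
  · rintro ⟨z, m, hm⟩
    refine ⟨⟨cZ x m g, m, rfl⟩, ?_⟩
    apply Subtype.ext
    have hs := Classical.choose_spec (⟨m, rfl⟩ : ∃ n : ℤ, cZ x n g = cZ x m g)
    simp only
    rw [(stab_shift H _ m).mp hs, hm]

lemma dvd_card_of_partition {α : Type*} [DecidableEq α] (k : ℕ) (f : α → Finset α) :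
    ∀ s : Finset α, (∀ g ∈ s, f g ⊆ s) → (∀ g ∈ s, g ∈ f g) → (∀ g ∈ s, (f g).card = k) →
      (∀ g ∈ s, ∀ h, h ∈ f g → f h = f g) → k ∣ s.card := by
  intro s
  induction s using Finset.strongInduction with
  | _ s ih =>
    intro h1 h2 h3 h4
    rcases s.eq_empty_or_nonempty with rfl | ⟨g, hg⟩
    · simp
    · have hfg : f g ⊆ s := h1 g hg
      have hss : s \ f g ⊂ s := by
        refine Finset.sdiff_ssubset ?_ ⟨g, h2 g hg⟩
        exact hfg
      have hdisj : ∀ h ∈ s \ f g, ∀ y ∈ f h, y ∉ f g := by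
        intro h hh y hy hyg
        have hhs : h ∈ s := (Finset.mem_sdiff.mp hh).1
        have hfy1 : f y = f g := h4 g hg y hyg
        have hfy2 : f y = f h := h4 h hhs y hy
        have : h ∈ f g := by
          rw [← hfy1, hfy2]; exact h2 h hhs
        exact (Finset.mem_sdiff.mp hh).2 this
      have key : k ∣ (s \ f g).card := by
        refine ih (s \ f g) hss ?_ ?_ ?_ ?_
        · intro h hh y hy
          refine Finset.mem_sdiff.mpr ⟨h1 h (Finset.mem_sdiff.mp hh).1 hy, hdisj h hh y hy⟩
        · intro h hh; exact h2 h (Finset.mem_sdiff.mp hh).1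
        · intro h hh; exact h3 h (Finset.mem_sdiff.mp hh).1
        · intro h hh; exact h4 h (Finset.mem_sdiff.mp hh).1
      have hcard : (s \ f g).card + k = s.card := by
        rw [← h3 g hg]
        exact Finset.card_sdiff_add_card_eq_card hfg
      rw [← hcard]
      exact Nat.dvd_add key dvd_rfl

end CycleAux

open CycleAux
theorem cycle_lengths_constant_on_cycleRel_class
    {G : Type*} [Group G] [Finite G] (hZ : Subgroup.center G = ⊥)
    (a x : G) (hx : x ∈ assocAbelianSet a) (g₁ : G) :
    ∃ k : ℕ, 0 < k ∧
      (∀ g ∈ {g : G | cycleRel a g₁ g},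
        Nat.card {y : G | ∃ n : ℤ, x ^ n * g * (x ^ n)⁻¹ = y} = k) ∧
      k ∣ Nat.card {g : G | cycleRel x g₁ g} := by
  classical
  have hcomm : x * a = a * x := comm_of_assoc hx
  have hcomm' : Commute x a := hcomm
  set k := Nat.card {y : G | ∃ n : ℤ, cZ x n g₁ = y} with hk
  refine ⟨k, ?_, ?_, ?_⟩
  · -- positivity
    have hne : Nonempty {y : G | ∃ n : ℤ, cZ x n g₁ = y} := ⟨⟨g₁, 0, cZ_zero x g₁⟩⟩
    exact Nat.card_pos
  · -- constancy on the cycleRel a class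
    intro g hg
    have stab : ∀ n : ℤ, cZ x n g₁ = g₁ ↔ cZ x n g = g := by
      intro n
      have hcn : x ^ n * a = a * x ^ n := (hcomm'.zpow_left n).eq
      exact hg.2 (x ^ n) hcn
    exact (card_orbit_eq stab).symm
  · -- divisibility
    set P₁ : Set G := {g : G | cycleRel x g₁ g} with hP₁
    have hP₁fin : P₁.Finite := Set.toFinite P₁
    let f : G → Finset G := fun g => (Set.toFinite {y : G | ∃ n : ℤ, cZ x n g = y}).toFinset
    have hfmem : ∀ g y : G, y ∈ f g ↔ ∃ n : ℤ, cZ x n g = y := by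
      intro g y
      exact Set.Finite.mem_toFinset _
    -- orbits: cycleRel x g (cZ x n g)
    have orbit_rel : ∀ g : G, ∀ n : ℤ, cycleRel x g (cZ x n g) := by
      intro g n
      refine ⟨pseudoRel_zpow_conj x g n, ?_⟩
      intro z hz
      have hzc : Commute z (x ^ n) := Commute.zpow_right hz n
      have key : ∀ w : G, z * cZ x n w * z⁻¹ = cZ x n (z * w * z⁻¹) := by
        intro w
        simp only [cZ]
        rw [show z * (x ^ n * w * (x ^ n)⁻¹) * z⁻¹ = (z * x ^ n) * w * (z * x ^ n)⁻¹ by group,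
          hzc.eq, show (x ^ n * z) * w * (x ^ n * z)⁻¹ = x ^ n * (z * w * z⁻¹) * (x ^ n)⁻¹ by group]
      constructor
      · intro h
        rw [key g, h]
      · intro h
        exact cZ_inj (by rw [← key g, h] : cZ x n (z * g * z⁻¹) = cZ x n g)
    -- common stabilizer on P₁
    have stabP₁ : ∀ g ∈ P₁, ∀ n : ℤ, cZ x n g₁ = g₁ ↔ cZ x n g = g := by
      intro g hg n
      exact hg.2 (x ^ n) ((Commute.refl x).zpow_left n).eq
    have hdvd := dvd_card_of_partition k f hP₁fin.toFinset ?_ ?_ ?_ ?_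
    · have hcard : Nat.card P₁ = hP₁fin.toFinset.card := by
        rw [Nat.card_coe_set_eq, Set.ncard_eq_toFinset_card _ hP₁fin]
      rw [hcard]
      exact hdvd
    · -- f g ⊆ P₁
      intro g hg y hy
      have hgP : cycleRel x g₁ g := hP₁fin.mem_toFinset.mp hg
      obtain ⟨n, hn⟩ := (hfmem g y).mp hy
      have h2 : cycleRel x g₁ (cZ x n g) :=
        ⟨fun w => (hgP.1 w).trans ((orbit_rel g n).1 w),
         fun z hz => (hgP.2 z hz).trans ((orbit_rel g n).2 z hz)⟩
      rw [← hn] at *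
      exact hP₁fin.mem_toFinset.mpr h2
    · -- g ∈ f g
      intro g _
      exact (hfmem g g).mpr ⟨0, cZ_zero x g⟩
    · -- card of each orbit is k
      intro g hg
      have hgP : g ∈ P₁ := hP₁fin.mem_toFinset.mp hg
      have h1 : (f g).card = Nat.card {y : G | ∃ n : ℤ, cZ x n g = y} := by
        rw [Nat.card_coe_set_eq, Set.ncard_eq_toFinset_card _ (Set.toFinite _)]
      rw [h1, ← card_orbit_eq (stabP₁ g hgP)]
    · -- orbits coincide or are disjoint
      intro g _ h hh
      obtain ⟨m, hm⟩ := (hfmem g h).mp hh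
      subst hm
      apply Finset.ext
      intro y
      rw [hfmem, hfmem]
      constructor
      · rintro ⟨n, hn⟩
        exact ⟨n + m, by rw [← cZ_add, hn]⟩
      · rintro ⟨n, hn⟩
        exact ⟨n - m, by rw [cZ_add, show n - m + m = n by ring, hn]⟩
end

section
/- Let p be a prime and let K be a finite group. Let Z∞(K) denote the hypercenter of K, i.e., the stable (largest) term of the upper central series of K. Then K has a normal p-complement if and only if the quotient group K/Z∞(K) has a normal p-complement. -/
/-!
A normal `p`-complement passes to quotients, which gives one direction. For the other, since
the hypercenter of a finite group is a term of the upper central series, induction along that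
series reduces to lifting a normal `p`-complement from `G ⧸ Z` to `G` for a central subgroup `Z`.
The preimage `N` of the complement of `G ⧸ Z` has `p`-power index, and a Sylow `p`-subgroup of
`N` maps into a group of order prime to `p`, so it lies in `Z` and is central in `N`. Burnside's
transfer theorem gives `N` a normal `p`-complement; being a normal Hall subgroup of `N`, it is
characteristic in `N`, hence normal in `G`.
-/

/-- The hypercenter of a group: the stable (largest) term of the upper central
series, i.e. the supremum of all terms of the upper central series. -/
def hypercenter (K : Type*) [Group K] : Subgroup K :=
  ⨆ n : ℕ, upperCentralSeries K n

instance hypercenter_normal (K : Type*) [Group K] : (hypercenter K).Normal := by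
  constructor
  intro x hx g
  rw [hypercenter, Subgroup.mem_iSup_of_directed (K := fun n => upperCentralSeries K n) (by exact (upperCentralSeries_mono K).directed_le)] at hx ⊢
  obtain ⟨n, hn⟩ := hx
  exact ⟨n, (inferInstance : (Subgroup.upperCentralSeries K n).Normal).conj_mem x hn g⟩

/-- A finite group has a normal `p`-complement if it has a normal subgroup of
order coprime to `p` and index a power of `p`. -/
def HasNormalPComplement (p : ℕ) (K : Type*) [Group K] : Prop :=
  ∃ N : Subgroup K, N.Normal ∧ Nat.Coprime (Nat.card N) p ∧ ∃ m : ℕ, N.index = p ^ m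

open Subgroup

namespace Subgroup

variable {G : Type*} [Group G]

theorem le_of_coprime_card_index {H K : Subgroup G} [H.Normal]
    (h : (Nat.card K).Coprime H.index) : K ≤ H :=
  relIndex_eq_one.mp <|
    Nat.eq_one_of_dvd_coprimes h (H.relIndex_dvd_card K) (H.relIndex_dvd_index_of_normal K)

theorem Normal.characteristic_of_coprime {H : Subgroup G} [H.Normal]
    (h : (Nat.card H).Coprime H.index) : H.Characteristic :=
  characteristic_iff_map_le.mpr fun φ =>
    le_of_coprime_card_index <| by rwa [card_map_of_injective φ.injective]

end Subgroup

namespace HasNormalPComplement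

variable {p : ℕ} {G H : Type*} [Group G] [Group H]

theorem of_surjective (hp : p.Prime) (f : G →* H) (hf : Function.Surjective f)
    (hG : HasNormalPComplement p G) : HasNormalPComplement p H := by
  obtain ⟨N, hN, hcard, m, hindex⟩ := hG
  refine ⟨N.map f, hN.map f hf, hcard.coprime_dvd_left ?_, ?_⟩
  · simpa using card_dvd_of_surjective (f.subgroupMap N) (f.subgroupMap_surjective N)
  · obtain ⟨k, -, hk⟩ := (Nat.dvd_prime_pow hp).mp (hindex ▸ N.index_map_dvd hf)
    exact ⟨k, hk⟩

theorem of_mulEquiv (hp : p.Prime) (e : G ≃* H) (hG : HasNormalPComplement p G) :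
    HasNormalPComplement p H :=
  of_surjective hp e.toMonoidHom e.surjective hG

theorem of_normal_of_index_eq_pow {N : Subgroup G} [N.Normal] {m : ℕ} (hN : N.index = p ^ m)
    (hpN : HasNormalPComplement p N) : HasNormalPComplement p G := by
  obtain ⟨M, hM, hcard, a, hindex⟩ := hpN
  have : M.Characteristic := hM.characteristic_of_coprime (hindex ▸ hcard.pow_right a)
  refine ⟨M.map N.subtype, inferInstance, ?_, a + m, ?_⟩
  · rwa [card_map_of_injective N.subtype_injective]
  · rw [index_map_subtype, hindex, hN, pow_add]

/-- Burnside's normal complement theorem. -/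
theorem of_normalizer_le_centralizer [Fact p.Prime] [Finite G] (P : Sylow p G)
    (hP : normalizer (P : Set G) ≤ centralizer (P : Set G)) : HasNormalPComplement p G := by
  have hcompl := MonoidHom.ker_transferSylow_isComplement' P hP
  obtain ⟨a, ha⟩ := P.2.exists_card_eq
  refine ⟨(MonoidHom.transferSylow P hP).ker, inferInstance, ?_, a, ?_⟩
  · exact (Fact.out : p.Prime).coprime_iff_not_dvd.mpr
      (MonoidHom.not_dvd_card_ker_transferSylow P hP) |>.symm
  · rw [hcompl.symm.index_eq_card, ha]

theorem of_quotient_of_le_center (hp : p.Prime) [Finite G] {Z : Subgroup G} [Z.Normal]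
    (hZ : Z ≤ center G) (hG : HasNormalPComplement p (G ⧸ Z)) : HasNormalPComplement p G := by
  have : Fact p.Prime := ⟨hp⟩
  obtain ⟨N, hN, hcard, m, hindex⟩ := hG
  set N' := N.comap (QuotientGroup.mk' Z)
  have : N'.Normal := hN.comap _
  have hN'index : N'.index = p ^ m := by
    rw [index_comap_of_surjective _ (QuotientGroup.mk'_surjective Z), hindex]
  have hZindex : (Z.subgroupOf N').index = Nat.card N :=
    calc Z.relIndex N' = (⊥ : Subgroup (G ⧸ Z)).relIndex (N'.map (QuotientGroup.mk' Z)) := by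
          rw [← relIndex_comap, MonoidHom.comap_bot, QuotientGroup.ker_mk']
      _ = Nat.card N := by
          rw [relIndex_bot_left, map_comap_eq_self_of_surjective (QuotientGroup.mk'_surjective Z)]
  obtain ⟨P⟩ : Nonempty (Sylow p N') := inferInstance
  have hPZ : (P : Subgroup N') ≤ Z.subgroupOf N' := by
    obtain ⟨a, ha⟩ := P.2.exists_card_eq
    exact le_of_coprime_card_index (by rw [ha, hZindex]; exact (hcard.pow_right a).symm)
  refine of_normal_of_index_eq_pow hN'index (of_normalizer_le_centralizer P fun g _ => ?_)
  exact mem_centralizer_iff.mpr fun x hx => Subtype.ext (mem_center_iff.mp (hZ (hPZ hx)) g).symm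

theorem of_quotient_upperCentralSeries (hp : p.Prime) [Finite G] (n : ℕ)
    (hG : HasNormalPComplement p (G ⧸ Subgroup.upperCentralSeries G n)) :
    HasNormalPComplement p G := by
  induction n generalizing G with
  | zero => exact of_mulEquiv hp (QuotientGroup.quotientBot (G := G)) hG
  | succ n ih =>
    refine of_quotient_of_le_center hp le_rfl (ih ?_)
    have hle := (Subgroup.comap_upperCentralSeries_quotient_center (G := G) n).ge
    exact of_surjective hp (QuotientGroup.map _ _ _ hle)
      (QuotientGroup.map_surjective_of_surjective _ _ _
        ((QuotientGroup.mk'_surjective _).comp (QuotientGroup.mk'_surjective _)) hle) hG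

end HasNormalPComplement

theorem exists_hypercenter_eq_upperCentralSeries (G : Type*) [Group G] [Finite G] :
    ∃ n, hypercenter G = Subgroup.upperCentralSeries G n :=
  ⟨_, WellFoundedGT.iSup_eq_monotonicSequenceLimit ⟨_, Subgroup.upperCentralSeries_mono G⟩⟩

theorem pNilpotent_iff_quotient_hypercenter_pNilpotent
    (p : ℕ) (hp : p.Prime) (K : Type*) [Group K] [Finite K] :
    HasNormalPComplement p K ↔ HasNormalPComplement p (K ⧸ hypercenter K) := by
  refine ⟨.of_surjective hp _ (QuotientGroup.mk'_surjective _), fun h => ?_⟩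
  obtain ⟨n, hn⟩ := exists_hypercenter_eq_upperCentralSeries K
  exact .of_quotient_upperCentralSeries hp n
    (.of_mulEquiv hp (QuotientGroup.quotientMulEquivOfEq hn) h)
end
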